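/- If words x and y over the positive integers are Knuth equivalent, then w(x) = w(y) and α(x) = α(y), where w_i counts occurrences of i and α_i(x) = max over suffixes x̃ of x of (w_{i+1}(x̃) − w_i(x̃)). Equivalently, u_x(λ) = u_y(λ) for every partition λ. -/

import Mathlib

/-!
Knuth moves only permute letters, so they preserve the weight `w`. For `α` one has
`α_i(x ++ y) = max (α_i(x) + w_{i+1}(y) - w_i(y)) (α_i(y))`, so a move `p ++ u ++ s ↦ p ++ v ++ s`
preserves `α_i` as soon as `u` and `v` have the same weight and the same `α_i`, which is a finite
check on three letters. Finally `u_x(λ)` is nonzero exactly when every suffix of `x` adds boxes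
keeping the column lengths weakly decreasing, that is when `α_i(x) ≤ λ'_i - λ'_{i+1}` for all `i`,
and it then adds `w(x)` to the columns; so `u_x` is determined by `w(x)` and `α(x)`.
-/

/-- A partition, represented by its column lengths (the conjugate):
`c i` is the number of boxes in column `i`. -/
def IsPartition (c : ℕ+ → ℕ) : Prop :=
  (∀ i : ℕ+, c (i + 1) ≤ c i) ∧ ∃ N : ℕ+, ∀ i : ℕ+, N ≤ i → c i = 0

open Classical in
/-- The Schur operator `u_i`: add a box to column `i` if the result is a
partition, else `none` (representing `0`). -/
noncomputable def addBox (i : ℕ+) (c : ℕ+ → ℕ) : Option (ℕ+ → ℕ) :=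
  if IsPartition (Function.update c i (c i + 1)) then
    some (Function.update c i (c i + 1))
  else none

/-- `u_x = u_{x_1} ∘ ⋯ ∘ u_{x_l}` for a word `x = x_1 ⋯ x_l`. -/
noncomputable def schurWord (x : List ℕ+) (c : ℕ+ → ℕ) : Option (ℕ+ → ℕ) :=
  x.foldr (fun i o => o.bind (addBox i)) (some c)

/-- `α_i(x)`: the maximum over suffixes `s` of `x` of `w_{i+1}(s) - w_i(s)`. -/
def alpha (i : ℕ+) (x : List ℕ+) : ℕ :=
  (x.tails.map (fun s => s.count (i + 1) - s.count i)).foldr max 0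

/-- An elementary Knuth move on consecutive subwords:
`bac ↔ bca` for `a < b ≤ c`, and `acb ↔ cab` for `a ≤ b < c`. -/
inductive KnuthStep : List ℕ+ → List ℕ+ → Prop
  | k1 (p s : List ℕ+) (a b c : ℕ+) (h1 : a < b) (h2 : b ≤ c) :
      KnuthStep (p ++ [b, a, c] ++ s) (p ++ [b, c, a] ++ s)
  | k2 (p s : List ℕ+) (a b c : ℕ+) (h1 : a ≤ b) (h2 : b < c) :
      KnuthStep (p ++ [a, c, b] ++ s) (p ++ [c, a, b] ++ s)

/-- Knuth equivalence of words. -/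
def KnuthEquiv : List ℕ+ → List ℕ+ → Prop := Relation.EqvGen KnuthStep

section Alpha

variable (i : ℕ+)

theorem alpha_nil : alpha i [] = 0 := rfl

theorem alpha_cons (v : ℕ+) (z : List ℕ+) :
    alpha i (v :: z) = max ((v :: z).count (i + 1) - (v :: z).count i) (alpha i z) := by
  simp [alpha]

theorem alpha_le_iff {x : List ℕ+} {n : ℕ} :
    alpha i x ≤ n ↔ ∀ t ∈ x.tails, t.count (i + 1) ≤ t.count i + n := by
  induction x with
  | nil => simp [alpha_nil]
  | cons v x ih => simp only [alpha_cons, max_le_iff, ih, List.tails_cons,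
      List.forall_mem_cons, Nat.sub_le_iff_le_add']

theorem count_sub_count_le_alpha (x : List ℕ+) : x.count (i + 1) - x.count i ≤ alpha i x :=
  Nat.sub_le_iff_le_add'.2 <|
    (alpha_le_iff i).1 le_rfl x ((List.mem_tails _ _).2 (List.suffix_refl x))

theorem alpha_append (x y : List ℕ+) :
    alpha i (x ++ y) = max (alpha i x + y.count (i + 1) - y.count i) (alpha i y) := by
  induction x with
  | nil => simpa [alpha_nil] using count_sub_count_le_alpha i y
  | cons v x ih =>
    simp only [List.cons_append, alpha_cons, ih, List.count_cons, List.count_append]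
    omega

theorem alpha_append_append_of_perm {u v : List ℕ+} (huv : u.Perm v) (h : alpha i u = alpha i v)
    (p s : List ℕ+) : alpha i (p ++ u ++ s) = alpha i (p ++ v ++ s) := by
  simp only [List.append_assoc, alpha_append, List.count_append, huv.count_eq, h]

theorem alpha_bac_eq_bca {a b c : ℕ+} (hab : a < b) (hbc : b ≤ c) :
    alpha i [b, a, c] = alpha i [b, c, a] := by
  rw [← PNat.coe_lt_coe] at hab
  rw [← PNat.coe_le_coe] at hbc
  simp only [alpha_cons, alpha_nil, List.count_cons, List.count_nil, beq_iff_eq, ← PNat.coe_inj,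
    PNat.add_coe, PNat.one_coe]
  split_ifs <;> omega

theorem alpha_acb_eq_cab {a b c : ℕ+} (hab : a ≤ b) (hbc : b < c) :
    alpha i [a, c, b] = alpha i [c, a, b] := by
  rw [← PNat.coe_le_coe] at hab
  rw [← PNat.coe_lt_coe] at hbc
  simp only [alpha_cons, alpha_nil, List.count_cons, List.count_nil, beq_iff_eq, ← PNat.coe_inj,
    PNat.add_coe, PNat.one_coe]
  split_ifs <;> omega

end Alpha

def addBoxes (c : ℕ+ → ℕ) (x : List ℕ+) : ℕ+ → ℕ := fun j => c j + x.count j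

theorem addBoxes_nil (c : ℕ+ → ℕ) : addBoxes c [] = c := rfl

theorem addBoxes_cons (c : ℕ+ → ℕ) (v : ℕ+) (x : List ℕ+) :
    addBoxes c (v :: x) = Function.update (addBoxes c x) v (addBoxes c x v + 1) := by
  ext j
  rcases eq_or_ne j v with rfl | hj
  · simp [addBoxes, add_assoc]
  · simp [addBoxes, hj, Ne.symm hj]

theorem addBoxes_congr_of_perm (c : ℕ+ → ℕ) {x y : List ℕ+} (h : x.Perm y) :
    addBoxes c x = addBoxes c y := by
  funext j
  simp only [addBoxes, h.count_eq]

theorem isPartition_addBoxes_iff {c : ℕ+ → ℕ} (hc : IsPartition c) (x : List ℕ+) :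
    IsPartition (addBoxes c x) ↔ ∀ j, addBoxes c x (j + 1) ≤ addBoxes c x j := by
  refine ⟨And.left, fun h => ⟨h, ?_⟩⟩
  obtain ⟨N, hN⟩ := hc.2
  obtain ⟨M, hM⟩ := x.toFinset.bddAbove
  refine ⟨max N (M + 1), fun j hj => ?_⟩
  have hjx : j ∉ x := fun hjx =>
    ((PNat.lt_add_right M 1).trans_le (le_of_max_le_right hj)).not_ge
      (hM (List.mem_toFinset.2 hjx))
  simp [addBoxes, hN j (le_of_max_le_left hj), List.count_eq_zero_of_not_mem hjx]

theorem schurWord_cons (v : ℕ+) (x : List ℕ+) (c : ℕ+ → ℕ) :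
    schurWord (v :: x) c = (schurWord x c).bind (addBox v) := rfl

open Classical in
theorem schurWord_eq_ite_tails {c : ℕ+ → ℕ} (hc : IsPartition c) (x : List ℕ+) :
    schurWord x c =
      if ∀ t ∈ x.tails, IsPartition (addBoxes c t) then some (addBoxes c x) else none := by
  induction x with
  | nil => simp [schurWord, addBoxes_nil, hc]
  | cons v x ih =>
    rw [schurWord_cons, ih]
    simp only [List.tails_cons, List.forall_mem_cons]
    by_cases hx : ∀ t ∈ x.tails, IsPartition (addBoxes c t)
    · rw [if_pos hx, Option.bind_some, addBox, ← addBoxes_cons]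
      exact if_congr (and_iff_left hx).symm rfl rfl
    · rw [if_neg hx, Option.bind_none, if_neg fun h => hx h.2]

open Classical in
theorem schurWord_eq_ite {c : ℕ+ → ℕ} (hc : IsPartition c) (x : List ℕ+) :
    schurWord x c =
      if ∀ i, alpha i x + c (i + 1) ≤ c i then some (addBoxes c x) else none := by
  rw [schurWord_eq_ite_tails hc]
  have hcol (i : ℕ+) : alpha i x + c (i + 1) ≤ c i ↔
      ∀ t ∈ x.tails, c (i + 1) + t.count (i + 1) ≤ c i + t.count i := by
    rw [← Nat.le_sub_iff_add_le (hc.1 i), alpha_le_iff]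
    exact forall₂_congr fun t _ => by have := hc.1 i; omega
  simp only [isPartition_addBoxes_iff hc, addBoxes, hcol]
  exact if_congr ⟨fun h i t ht => h t ht i, fun h t ht i => h i t ht⟩ rfl rfl

theorem KnuthStep.perm {x y : List ℕ+} (h : KnuthStep x y) : x.Perm y := by
  cases h with
  | k1 p s a b c => exact (((List.Perm.swap c a []).cons b).append_left p).append_right s
  | k2 p s a b c => exact ((List.Perm.swap c a [b]).append_left p).append_right s

theorem KnuthStep.alpha_eq (i : ℕ+) {x y : List ℕ+} (h : KnuthStep x y) :
    alpha i x = alpha i y := by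
  cases h with
  | k1 p s a b c hab hbc =>
    exact alpha_append_append_of_perm i ((List.Perm.swap c a []).cons b) (alpha_bac_eq_bca i hab hbc) p s
  | k2 p s a b c hab hbc =>
    exact alpha_append_append_of_perm i (List.Perm.swap c a [b]) (alpha_acb_eq_cab i hab hbc) p s

theorem KnuthEquiv.apply_eq {β : Sort*} {f : List ℕ+ → β}
    (hf : ∀ x y, KnuthStep x y → f x = f y) {x y : List ℕ+} (h : KnuthEquiv x y) : f x = f y :=
  congrArg (Quot.lift f hf) (Quot.eqvGen_sound h)

theorem KnuthEquiv.perm {x y : List ℕ+} (h : KnuthEquiv x y) : x.Perm y :=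
  (List.Perm.eqv _).eqvGen_iff.1 (h.mono fun _ _ => KnuthStep.perm)

theorem stmt10 (x y : List ℕ+) (h : KnuthEquiv x y) :
    (∀ i : ℕ+, x.count i = y.count i) ∧
    (∀ i : ℕ+, alpha i x = alpha i y) ∧
    (∀ c : ℕ+ → ℕ, IsPartition c → schurWord x c = schurWord y c) := by
  have hperm : x.Perm y := h.perm
  have halpha (i : ℕ+) : alpha i x = alpha i y := h.apply_eq fun _ _ => KnuthStep.alpha_eq i
  refine ⟨hperm.count_eq, halpha, fun c hc => ?_⟩
  rw [schurWord_eq_ite hc, schurWord_eq_ite hc, addBoxes_congr_of_perm c hperm]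
  congr 1
  exact propext (forall_congr' fun i => by rw [halpha])
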